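/- Let K be a flag simplicial complex whose one-skeleton is a chordal graph. Then every full subcomplex K_I is homotopy equivalent to a discrete set of points; in particular, H̃_p(K_I) = 0 for all p ≥ 1 and all I ⊆ [m]. -/

import Mathlib

/-- The sign `ε(i, σ) = (-1)^{#{j ∈ σ : j < i}}`. -/
def eps {m : ℕ} (i : Fin m) (σ : Finset (Fin m)) : ℤ :=
  (-1) ^ (σ.filter (fun j => j < i)).card

/-- The augmented (reduced) simplicial chain module on subsets of `[m]`. -/
abbrev Ch (m : ℕ) := Finset (Fin m) →₀ ℤ

/-- The simplicial boundary `∂(σ) = Σ_{i ∈ σ} ε(i,σ) (σ \ {i})`. -/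
noncomputable def bdry {m : ℕ} (x : Ch m) : Ch m :=
  x.sum fun σ c => ∑ i ∈ σ, (c * eps i σ) • Finsupp.single (σ.erase i) 1

/-- `K` is a flag complex: every set of vertices pairwise joined by edges is a face. -/
def IsFlag {m : ℕ} (K : Finset (Finset (Fin m))) : Prop :=
  ∀ S : Finset (Fin m), (∀ i ∈ S, ∀ j ∈ S, i ≠ j → ({i, j} : Finset (Fin m)) ∈ K) → S ∈ K

/-- The one-skeleton of `K`, as a simple graph on `[m]`. -/
def oneSkeleton {m : ℕ} (K : Finset (Finset (Fin m))) : SimpleGraph (Fin m) where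
  Adj i j := i ≠ j ∧ ({i, j} : Finset (Fin m)) ∈ K
  symm := by
    constructor
    intro i j h
    refine ⟨h.1.symm, ?_⟩
    rw [Finset.pair_comm]
    exact h.2
  loopless := by
    constructor
    intro i h
    exact h.1 rfl

/-- A graph is chordal if every cycle of length at least 4 has a chord. -/
def IsChordal {V : Type*} (G : SimpleGraph V) : Prop :=
  ∀ (v : V) (c : G.Walk v v), c.IsCycle → 4 ≤ c.length →
    ∃ x y, x ∈ c.support ∧ y ∈ c.support ∧ G.Adj x y ∧ s(x, y) ∉ c.edges

/-!
A chordal graph has a simplicial vertex (Dirac): one whose neighbours form a clique. For `u` and a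
component `C` of `G - N[u]`, the neighbours of `C` form a clique, because a chordless path through
`C` between two of them closes up with `u` into a cycle whose only possible chord joins the two;
a simplicial vertex of `C ∪ N(C)` chosen inside `C` is then simplicial in `G`.

If `v ∈ I` is simplicial in the one-skeleton of `K_I`, flagness makes its closed star a simplex.
Split a `p`-cycle `x` of `K_I` as `a + b`, where `a` collects the faces through `v`. Then `a` is
the cone from `v` over `bdry a`, a cycle of degree `p - 1 ≥ 0` in the link of `v`; the link is a
simplex, so `bdry a = bdry β` for a chain `β` of the link. Hence `x` is homologous in `K_I` to the
cycle `b + β` of `K_{I \ v}`, and induction on `|I|` concludes.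
-/

namespace SimpleGraph.Walk

variable {V : Type*} {G : SimpleGraph V}

lemma two_le_length_of_notMem_edges {u v : V} (p : G.Walk u v) (huv : u ≠ v)
    (h : s(u, v) ∉ p.edges) : 2 ≤ p.length := by
  rcases p with _ | ⟨_, _ | ⟨_, _⟩⟩
  · exact absurd rfl huv
  · simp at h
  · simp

lemma exists_length_lt_of_isChord {u v x y : V} (p : G.Walk u v) (h : p.IsChord s(x, y)) :
    ∃ q : G.Walk u v, q.support ⊆ p.support ∧ q.length < p.length := by
  classical
  obtain ⟨hxy, he, hx, hy⟩ := isChord_sym2Mk.1 h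
  set a := p.takeUntil x hx
  set b := p.dropUntil x hx
  have hab : a.append b = p := take_spec p hx
  have hlen : p.length = a.length + b.length := by rw [← hab, length_append]
  have hsa : a.support ⊆ p.support := support_takeUntil_subset_support p hx
  have hsb : b.support ⊆ p.support := support_dropUntil_subset_support p hx
  have hea : a.edges ⊆ p.edges := edges_takeUntil_subset_edges p hx
  have heb : b.edges ⊆ p.edges := edges_dropUntil_subset_edges p hx
  have hy' : y ∈ a.support ∨ y ∈ b.support := by
    rw [← mem_support_append_iff, hab]; exact hy
  rcases hy' with hya | hyb
  · refine ⟨(a.takeUntil y hya).append (cons hxy.symm b), ?_, ?_⟩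
    · intro w hw
      rcases (mem_support_append_iff _ _).1 hw with hw | hw
      · exact hsa (support_takeUntil_subset_support a hya hw)
      · rw [support_cons, List.mem_cons] at hw
        rcases hw with rfl | hw
        exacts [hy, hsb hw]
    · have hsplit := congrArg length (take_spec a hya)
      have h2 := two_le_length_of_notMem_edges (a.dropUntil y hya) hxy.ne.symm
        fun hm => he (Sym2.eq_swap ▸ hea (edges_dropUntil_subset_edges a hya hm))
      simp only [length_append, length_cons] at hsplit ⊢
      omega
  · refine ⟨a.append (cons hxy (b.dropUntil y hyb)), ?_, ?_⟩
    · intro w hw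
      rcases (mem_support_append_iff _ _).1 hw with hw | hw
      · exact hsa hw
      · rw [support_cons, List.mem_cons] at hw
        rcases hw with rfl | hw
        exacts [hx, hsb (support_dropUntil_subset_support b hyb hw)]
    · have hsplit := congrArg length (take_spec b hyb)
      have h2 := two_le_length_of_notMem_edges (b.takeUntil y hyb) hxy.ne
        fun hm => he (heb (edges_takeUntil_subset_edges b hyb hm))
      simp only [length_append, length_cons] at hsplit ⊢
      omega

lemma exists_isPath_isChordless {u v : V} (p : G.Walk u v) :
    ∃ q : G.Walk u v, q.IsPath ∧ q.IsChordless ∧ q.support ⊆ p.support := by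
  classical
  induction hn : p.length using Nat.strong_induction_on generalizing p with
  | _ n ih =>
  by_cases hpath : p.IsPath
  · by_cases hc : p.IsChordless
    · exact ⟨p, hpath, hc, List.Subset.refl _⟩
    · simp only [IsChordless, not_forall, not_not] at hc
      obtain ⟨e, he⟩ := hc
      induction e using Sym2.ind with
      | _ x y =>
      obtain ⟨q, hqs, hql⟩ := p.exists_length_lt_of_isChord he
      obtain ⟨r, hr, hrc, hrs⟩ := ih _ (hn ▸ hql) q rfl
      exact ⟨r, hr, hrc, List.Subset.trans hrs hqs⟩
  · have hlt : p.bypass.length < n := by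
      rw [← hn]
      by_contra! hle
      exact hpath (bypass_eq_self_of_length_le_length_bypass p hle ▸ bypass_isPath p)
    obtain ⟨r, hr, hrc, hrs⟩ := ih _ hlt p.bypass rfl
    exact ⟨r, hr, hrc, List.Subset.trans hrs (support_bypass_subset_support p)⟩

end SimpleGraph.Walk

section Chordal

variable {V : Type*} {G : SimpleGraph V}

open SimpleGraph Walk

theorem IsChordal.adj_of_walk (hG : IsChordal G) {u s t : V} (hs : G.Adj u s) (ht : G.Adj u t)
    (hst : s ≠ t) (p : G.Walk s t)
    (hp : ∀ a ∈ p.support, a ≠ s → a ≠ t → a ≠ u ∧ ¬ G.Adj u a) : G.Adj s t := by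
  classical
  by_contra hnst
  obtain ⟨q, hq, hqc, hqp⟩ := p.exists_isPath_isChordless
  have hu : u ∉ q.support := fun hu => by
    by_cases hus : u = s
    · exact hs.ne hus
    by_cases hut : u = t
    · exact ht.ne hut
    exact (hp u (hqp hu) hus hut).1 rfl
  have hq2 : 2 ≤ q.length :=
    q.two_le_length_of_notMem_edges hst fun h => hnst (q.adj_of_mem_edges h)
  let c : G.Walk u u := cons hs (q.concat ht.symm)
  have hc : c.IsCycle := by
    refine (cons_isCycle_iff _ hs).2 ⟨hq.concat hu ht.symm, ?_⟩
    rw [edges_concat, List.concat_eq_append, List.mem_append, List.mem_singleton, not_or]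
    refine ⟨fun h => hu (q.fst_mem_support_of_mem_edges h), fun h => ?_⟩
    rcases Sym2.eq_iff.1 h with ⟨h1, _⟩ | ⟨_, h2⟩
    exacts [ht.ne h1, hst h2]
  have hcs : ∀ a, a ∈ c.support ↔ a = u ∨ a ∈ q.support := by
    intro a
    simp only [c, support_cons, support_concat, List.mem_cons, List.mem_append]
    tauto
  have hce : ∀ e ∈ q.edges, e ∈ c.edges := fun e he => by
    simp only [c, edges_cons, edges_concat, List.mem_cons, List.concat_eq_append,
      List.mem_append]
    exact Or.inr (Or.inl he)
  have hspoke : ∀ a ∈ q.support, G.Adj u a → s(u, a) ∈ c.edges := by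
    intro a ha hua
    by_cases has : a = s
    · subst has; simp [c]
    by_cases hat : a = t
    · subst hat; simp [c, Sym2.eq_swap]
    exact absurd hua (hp a (hqp ha) has hat).2
  obtain ⟨x, y, hx, hy, hxy, hnot⟩ := hG u c hc (by simp [c]; omega)
  rcases (hcs x).1 hx with rfl | hxq <;> rcases (hcs y).1 hy with rfl | hyq
  · exact hxy.ne rfl
  · exact hnot (hspoke y hyq hxy)
  · exact hnot (Sym2.eq_swap ▸ hspoke x hxq hxy.symm)
  · exact hnot (hce _ (hqc.mem_edges hxq hyq hxy))

end Chordal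

section Dirac

variable {V : Type*} {G : SimpleGraph V}

open SimpleGraph Walk

def SimpleGraph.ReachableIn (G : SimpleGraph V) (D : Set V) (y z : V) : Prop :=
  ∃ p : G.Walk y z, ∀ a ∈ p.support, a ∈ D

lemma SimpleGraph.ReachableIn.refl {D : Set V} {y : V} (hy : y ∈ D) : G.ReachableIn D y y :=
  ⟨nil, by simpa using hy⟩

lemma SimpleGraph.ReachableIn.step {D : Set V} {y z w : V} (h : G.ReachableIn D y z)
    (hzw : G.Adj z w) (hw : w ∈ D) : G.ReachableIn D y w := by
  obtain ⟨p, hp⟩ := h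
  refine ⟨p.concat hzw, fun a ha => ?_⟩
  rw [support_concat, List.mem_append, List.mem_singleton] at ha
  rcases ha with ha | rfl
  exacts [hp a ha, hw]

theorem IsChordal.isClique_adj_reachableIn (hG : IsChordal G) {u y : V} {D : Set V}
    (hD : ∀ d ∈ D, d ≠ u ∧ ¬ G.Adj u d) :
    G.IsClique {w | G.Adj u w ∧ ∃ c, G.ReachableIn D y c ∧ G.Adj w c} := by
  rintro s ⟨hs, c, ⟨p, hp⟩, hsc⟩ t ⟨ht, d, ⟨q, hq⟩, htd⟩ hst
  refine hG.adj_of_walk hs ht hst (cons hsc (p.reverse.append (q.concat htd.symm))) ?_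
  intro a ha has hat
  simp only [support_cons, List.mem_cons, mem_support_append_iff, support_reverse,
    List.mem_reverse, support_concat, List.mem_append, List.not_mem_nil, or_false] at ha
  rcases ha with rfl | ha | ha | rfl
  · exact absurd rfl has
  · exact hD a (hp a ha)
  · exact hD a (hq a ha)
  · exact absurd rfl hat

lemma isClique_neighborSet_inter_of_erase [DecidableEq V] {I : Finset V} {u v : V}
    (hu : ∀ y ∈ I, y ≠ u → G.Adj u y) (hv : G.IsClique (G.neighborSet v ∩ ↑(I.erase u))) :
    G.IsClique (G.neighborSet v ∩ I) := by
  refine (isClique_insert.2 ⟨hv, fun w hw huw => hu w ?_ huw.symm⟩).subset ?_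
  · exact Finset.mem_of_mem_erase hw.2
  · rintro w ⟨hvw, hwI⟩
    by_cases hwu : w = u
    · exact Or.inl hwu
    · exact Or.inr ⟨hvw, Finset.mem_erase.2 ⟨hwu, hwI⟩⟩

/-- `C` is the component of `y` in `I` minus the closed neighbourhood of `u`, and `S'` is the
neighbourhood of `C` in `I`. -/
theorem IsChordal.exists_isClique_boundary_component [DecidableEq V] (hG : IsChordal G)
    {I : Finset V} {u y : V} (hyI : y ∈ I) (hyu : y ≠ u) (hy : ¬ G.Adj u y) :
    ∃ C S' : Finset V, y ∈ C ∧ C ∪ S' ⊆ I.erase u ∧ G.IsClique (S' : Set V) ∧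
      (∀ c ∈ C, ¬ G.Adj u c) ∧ (∀ s ∈ S', G.Adj u s) ∧
      ∀ c ∈ C, ∀ w ∈ I, G.Adj c w → w ∈ C ∪ S' := by
  classical
  set D : Set V := {d | d ∈ I ∧ d ≠ u ∧ ¬ G.Adj u d}
  have hD : ∀ c, G.ReachableIn D y c → c ∈ D := fun c ⟨p, hp⟩ => hp c p.end_mem_support
  set C := I.filter (G.ReachableIn D y)
  refine ⟨C, I.filter fun w => G.Adj u w ∧ ∃ c ∈ C, G.Adj w c,
    Finset.mem_filter.2 ⟨hyI, .refl ⟨hyI, hyu, hy⟩⟩, ?_, ?_,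
    fun c hc => (hD c (Finset.mem_filter.1 hc).2).2.2,
    fun s hs => (Finset.mem_filter.1 hs).2.1, fun c hc w hwI hcw => ?_⟩
  · refine Finset.union_subset (fun c hc => ?_) fun s hs => ?_
    · obtain ⟨hcI, hc⟩ := Finset.mem_filter.1 hc
      exact Finset.mem_erase.2 ⟨(hD c hc).2.1, hcI⟩
    · obtain ⟨hsI, hus, -⟩ := Finset.mem_filter.1 hs
      exact Finset.mem_erase.2 ⟨hus.ne.symm, hsI⟩
  · refine (hG.isClique_adj_reachableIn (D := D) (y := y) fun d hd => hd.2).subset fun w hw => ?_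
    obtain ⟨-, huw, c, hc, hwc⟩ := Finset.mem_filter.1 hw
    exact ⟨huw, c, (Finset.mem_filter.1 hc).2, hwc⟩
  · obtain ⟨-, hc⟩ := Finset.mem_filter.1 hc
    by_cases huw : G.Adj u w
    · exact Finset.mem_union_right _ (Finset.mem_filter.2 ⟨hwI, huw, c,
        Finset.mem_filter.2 ⟨(hD c hc).1, hc⟩, hcw.symm⟩)
    · have hwu : w ≠ u := fun h => (hD c hc).2.2 (h ▸ hcw.symm)
      exact Finset.mem_union_left _ (Finset.mem_filter.2 ⟨hwI, hc.step hcw ⟨hwI, hwu, huw⟩⟩)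

/-- Dirac's lemma. Avoiding an arbitrary clique `S` is what lets the induction pass to `C ∪ S'`,
where the vertex found has to lie in `C`. -/
theorem IsChordal.exists_isClique_neighborSet_inter (hG : IsChordal G)
    (I : Finset V) {S : Set V} (hS : G.IsClique S) {x : V} (hxI : x ∈ I) (hxS : x ∉ S) :
    ∃ v ∈ I, v ∉ S ∧ G.IsClique (G.neighborSet v ∩ I) := by
  classical
  induction I using Finset.strongInduction generalizing S x with
  | H I ih =>
  obtain ⟨u, huI, huS⟩ : ∃ u ∈ I, ∀ s ∈ S, s ∈ I → s ≠ u → G.Adj u s := by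
    by_cases h : ∃ s ∈ S, s ∈ I
    · obtain ⟨s, hsS, hsI⟩ := h
      exact ⟨s, hsI, fun t htS _ hts => hS hsS htS (Ne.symm hts)⟩
    · push Not at h
      exact ⟨x, hxI, fun s hs hsI => absurd hsI (h s hs)⟩
  by_cases huniv : ∀ y ∈ I, y ≠ u → G.Adj u y
  · by_cases hx' : ∃ x' ∈ I, x' ≠ u ∧ x' ∉ S
    · obtain ⟨x', hx'I, hx'u, hx'S⟩ := hx'
      obtain ⟨v, hvI, hvS, hv⟩ :=
        ih (I.erase u) (Finset.erase_ssubset huI) hS (Finset.mem_erase.2 ⟨hx'u, hx'I⟩) hx'S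
      exact ⟨v, Finset.mem_of_mem_erase hvI, hvS, isClique_neighborSet_inter_of_erase huniv hv⟩
    · push Not at hx'
      obtain rfl : x = u := by_contra fun h => hxS (hx' x hxI h)
      exact ⟨x, hxI, hxS, hS.subset fun w ⟨hw, hwI⟩ => hx' w hwI hw.ne.symm⟩
  · push Not at huniv
    obtain ⟨y, hyI, hyu, hy⟩ := huniv
    obtain ⟨C, S', hyC, hCS', hS', hC, hS'u, hCnbhd⟩ :=
      hG.exists_isClique_boundary_component hyI hyu hy
    have hsub : C ∪ S' ⊂ I := Finset.ssubset_of_subset_of_ssubset hCS' (Finset.erase_ssubset huI)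
    obtain ⟨v, hvI', hvS', hv⟩ := ih _ hsub hS' (Finset.mem_union_left _ hyC)
      fun h => hy (hS'u y h)
    have hvC : v ∈ C := (Finset.mem_union.1 hvI').resolve_right hvS'
    have hvu : v ≠ u := (Finset.mem_erase.1 (hCS' hvI')).1
    refine ⟨v, Finset.mem_of_mem_erase (hCS' hvI'), fun hvS => hC v hvC ?_, hv.subset ?_⟩
    · exact huS v hvS (Finset.mem_of_mem_erase (hCS' hvI')) hvu
    · rintro w ⟨hvw, hwI⟩
      exact ⟨hvw, hCnbhd v hvC w hwI hvw⟩

end Dirac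

section Chains

variable {m : ℕ}

open Finsupp

lemma eps_mul_self (i : Fin m) (σ : Finset (Fin m)) : eps i σ * eps i σ = 1 := by
  rw [eps, ← pow_add, ← two_mul, pow_mul, neg_one_sq, one_pow]

lemma eps_erase_self (v : Fin m) (σ : Finset (Fin m)) : eps v (σ.erase v) = eps v σ := by
  rw [eps, eps, Finset.filter_erase, Finset.erase_eq_of_notMem (by simp)]

lemma eps_insert_self (v : Fin m) (σ : Finset (Fin m)) : eps v (insert v σ) = eps v σ := by
  rw [eps, eps, Finset.filter_insert, if_neg (lt_irrefl v)]

lemma eps_erase {i : Fin m} {σ : Finset (Fin m)} (hi : i ∈ σ) (j : Fin m) :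
    eps j (σ.erase i) = (if i < j then -1 else 1) * eps j σ := by
  rw [eps, eps, Finset.filter_erase]
  split_ifs with h
  · rw [← Finset.card_erase_add_one (Finset.mem_filter.2 ⟨hi, h⟩), pow_succ]; ring
  · have hi' : i ∉ σ.filter (· < j) := fun hm => h (Finset.mem_filter.1 hm).2
    rw [Finset.erase_eq_of_notMem hi', one_mul]

lemma eps_insert {i : Fin m} {σ : Finset (Fin m)} (hi : i ∉ σ) (j : Fin m) :
    eps j (insert i σ) = (if i < j then -1 else 1) * eps j σ := by
  have := eps_erase (Finset.mem_insert_self i σ) j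
  rw [Finset.erase_insert hi] at this
  rw [this, ← mul_assoc]
  split_ifs <;> ring

noncomputable def bdryHom : Ch m →+ Ch m :=
  liftAddHom fun σ => ∑ i ∈ σ, eps i σ • singleAddHom (σ.erase i)

lemma bdryHom_apply (x : Ch m) : bdryHom x = bdry x := by
  refine Finsupp.sum_congr fun σ _ => ?_
  rw [AddMonoidHom.finsetSum_apply]
  refine Finset.sum_congr rfl fun i _ => ?_
  rw [AddMonoidHom.smul_apply, singleAddHom_apply, smul_single, smul_single, smul_eq_mul,
    smul_eq_mul, mul_one, mul_comm]

lemma bdry_add (x y : Ch m) : bdry (x + y) = bdry x + bdry y := by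
  simp only [← bdryHom_apply, map_add]

lemma bdry_sub (x y : Ch m) : bdry (x - y) = bdry x - bdry y := by
  simp only [← bdryHom_apply, map_sub]

lemma bdry_zero : bdry (0 : Ch m) = 0 := sum_zero_index

lemma bdry_single (σ : Finset (Fin m)) (c : ℤ) :
    bdry (single σ c) = ∑ i ∈ σ, single (σ.erase i) (eps i σ * c) := by
  simp [← bdryHom_apply, bdryHom]

-- The sign `eps v σ` is the one making `cone v` a contracting homotopy.
noncomputable def cone (v : Fin m) : Ch m →+ Ch m :=
  liftAddHom fun σ => if v ∈ σ then 0 else eps v σ • singleAddHom (insert v σ)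

lemma cone_single (v : Fin m) (σ : Finset (Fin m)) (c : ℤ) :
    cone v (single σ c) = if v ∈ σ then 0 else single (insert v σ) (eps v σ * c) := by
  rw [cone, liftAddHom_apply_single]
  split_ifs <;> simp

lemma eps_erase_mul_eps {i j : Fin m} {σ : Finset (Fin m)} (hi : i ∈ σ) (hj : j ∈ σ)
    (hij : i ≠ j) : eps j (σ.erase i) * eps i σ = -(eps i (σ.erase j) * eps j σ) := by
  rw [eps_erase hi, eps_erase hj]
  rcases hij.lt_or_gt with h | h
  · rw [if_pos h, if_neg h.not_gt]; ring
  · rw [if_neg h.not_gt, if_pos h]; ring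

lemma bdry_bdry (x : Ch m) : bdry (bdry x) = 0 := by
  simp only [← bdryHom_apply]
  rw [← AddMonoidHom.comp_apply, show bdryHom.comp bdryHom = (0 : Ch m →+ Ch m) from ?_,
    AddMonoidHom.zero_apply]
  refine addHom_ext fun σ c => ?_
  simp only [AddMonoidHom.comp_apply, AddMonoidHom.zero_apply, bdryHom_apply, bdry_single,
    map_sum, Finset.sum_sigma']
  refine Finset.sum_involution (fun p _ => ⟨p.2, p.1⟩) ?_ ?_ ?_ ?_
  · rintro ⟨i, j⟩ hp
    obtain ⟨hi, hj⟩ := Finset.mem_sigma.1 hp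
    obtain ⟨hji, hj⟩ := Finset.mem_erase.1 hj
    rw [Finset.erase_right_comm, ← single_add, ← mul_assoc, ← mul_assoc,
      eps_erase_mul_eps hi hj hji.symm, neg_mul, neg_add_cancel, single_zero]
  · rintro ⟨i, j⟩ hp _ h
    exact (Finset.mem_erase.1 (Finset.mem_sigma.1 hp).2).1 (congrArg Sigma.fst h)
  · rintro ⟨i, j⟩ hp
    obtain ⟨hi, hj⟩ := Finset.mem_sigma.1 hp
    obtain ⟨hji, hj⟩ := Finset.mem_erase.1 hj
    exact Finset.mem_sigma.2 ⟨hj, Finset.mem_erase.2 ⟨hji.symm, hi⟩⟩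
  · intros; rfl

lemma bdry_cone_add_cone_bdry (v : Fin m) (x : Ch m) : bdry (cone v x) + cone v (bdry x) = x := by
  simp only [← bdryHom_apply]
  rw [← AddMonoidHom.comp_apply, ← AddMonoidHom.comp_apply (cone v), ← AddMonoidHom.add_apply,
    show bdryHom.comp (cone v) + (cone v).comp bdryHom = AddMonoidHom.id (Ch m) from ?_,
    AddMonoidHom.id_apply]
  refine addHom_ext fun σ c => ?_
  simp only [AddMonoidHom.add_apply, AddMonoidHom.comp_apply, AddMonoidHom.id_apply,
    bdryHom_apply, cone_single, bdry_single, map_sum]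
  by_cases hv : v ∈ σ
  · rw [if_pos hv, bdry_zero, zero_add, Finset.sum_eq_single_of_mem v hv
      fun i _ hiv => if_pos (Finset.mem_erase.2 ⟨Ne.symm hiv, hv⟩),
      if_neg (Finset.notMem_erase v σ), Finset.insert_erase hv, eps_erase_self,
      ← mul_assoc, eps_mul_self, one_mul]
  · rw [if_neg hv, bdry_single, Finset.sum_insert hv, Finset.erase_insert hv, eps_insert_self,
      ← mul_assoc, eps_mul_self, one_mul, add_assoc, ← Finset.sum_add_distrib,
      Finset.sum_eq_zero, add_zero]
    intro i hi
    have hiv : i ≠ v := fun h => hv (h ▸ hi)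
    rw [if_neg fun h => hv (Finset.mem_of_mem_erase h),
      Finset.erase_insert_of_ne hiv.symm, ← single_add, eps_insert hv, eps_erase hi]
    have hco : (if v < i then -1 else 1) * eps i σ * (eps v σ * c)
        + (if i < v then -1 else 1) * eps v σ * (eps i σ * c) = 0 := by
      rcases hiv.lt_or_gt with h | h
      · rw [if_neg h.not_gt, if_pos h]; ring
      · rw [if_pos h, if_neg h.not_gt]; ring
    rw [hco, single_zero]

lemma mem_support_bdry {x : Ch m} {σ : Finset (Fin m)} (h : σ ∈ (bdry x).support) :
    ∃ τ ∈ x.support, ∃ i ∈ τ, τ.erase i = σ := by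
  obtain ⟨τ, hτ, h⟩ := Finset.mem_biUnion.1 (support_sum h)
  obtain ⟨i, hi, h⟩ := Finset.mem_biUnion.1 (support_finsetSum h)
  exact ⟨τ, hτ, i, hi, (Finset.mem_singleton.1 (support_single_subset (support_smul h))).symm⟩

lemma mem_support_cone {v : Fin m} {x : Ch m} {σ : Finset (Fin m)}
    (h : σ ∈ (cone v x).support) : ∃ τ ∈ x.support, v ∉ τ ∧ insert v τ = σ := by
  rw [cone, liftAddHom_apply] at h
  obtain ⟨τ, hτ, h⟩ := Finset.mem_biUnion.1 (support_sum h)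
  by_cases hv : v ∈ τ
  · simp [hv] at h
  · rw [if_neg hv, AddMonoidHom.smul_apply, singleAddHom_apply, smul_single] at h
    exact ⟨τ, hτ, hv, (Finset.mem_singleton.1 (support_single_subset h)).symm⟩

lemma cone_eq_zero {v : Fin m} {x : Ch m} (h : ∀ σ ∈ x.support, v ∈ σ) : cone v x = 0 := by
  rw [cone, liftAddHom_apply]
  exact Finset.sum_eq_zero fun σ hσ => by simp [h σ hσ]

lemma cone_bdry_eq_self {v : Fin m} {x : Ch m} (h : ∀ σ ∈ x.support, v ∈ σ) :
    cone v (bdry x) = x := by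
  simpa [cone_eq_zero h, bdry_zero] using bdry_cone_add_cone_bdry v x

lemma bdry_cone_eq_self {v : Fin m} {x : Ch m} (h : bdry x = 0) : bdry (cone v x) = x := by
  simpa [h] using bdry_cone_add_cone_bdry v x

theorem exists_bdry_eq_of_supported_subset {L : Set (Fin m)} {k : ℕ} (hk : 1 ≤ k) {c : Ch m}
    (hc : c ∈ supported ℤ ℤ {σ | ↑σ ⊆ L ∧ σ.card = k}) (hbc : bdry c = 0) :
    ∃ β ∈ supported ℤ ℤ {σ | ↑σ ⊆ L ∧ σ.card = k + 1}, bdry β = c := by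
  rcases eq_or_ne c 0 with rfl | hc0
  · exact ⟨0, zero_mem _, bdry_zero⟩
  obtain ⟨σ, hσ⟩ := support_nonempty_iff.2 hc0
  obtain ⟨hσL, hσk⟩ := (mem_supported ℤ c).1 hc hσ
  obtain ⟨w, hw⟩ := Finset.card_pos.1 (hσk ▸ hk)
  refine ⟨cone w c, (mem_supported ℤ _).2 fun τ hτ => ?_, bdry_cone_eq_self hbc⟩
  obtain ⟨ρ, hρ, hwρ, rfl⟩ := mem_support_cone hτ
  obtain ⟨hρL, hρk⟩ := (mem_supported ℤ c).1 hc hρ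
  refine ⟨?_, by rw [Finset.card_insert_of_notMem hwρ, hρk]⟩
  rw [Finset.coe_insert]
  exact Set.insert_subset (hσL hw) hρL

end Chains

section FullSubcomplex

variable {m : ℕ} {K : Finset (Finset (Fin m))}

open Finsupp SimpleGraph

lemma IsFlag.mem_of_isClique (hflag : IsFlag K) {S : Finset (Fin m)}
    (hS : (oneSkeleton K).IsClique (S : Set (Fin m))) : S ∈ K :=
  hflag S fun _ hi _ hj hij => (hS hi hj hij).2

variable (K) in
/-- Chains of the full subcomplex `K_I` on faces with `n` vertices, i.e. of degree `n - 1`. -/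
def fullChains (I : Finset (Fin m)) (n : ℕ) : Submodule ℤ (Ch m) :=
  supported ℤ ℤ {σ | σ ∈ K ∧ σ ⊆ I ∧ σ.card = n}

lemma fullChains_mono {I J : Finset (Fin m)} (hIJ : I ⊆ J) (n : ℕ) :
    fullChains K I n ≤ fullChains K J n :=
  supported_mono fun _ ⟨hK, hI, hn⟩ => ⟨hK, hI.trans hIJ, hn⟩

lemma IsFlag.insert_mem_of_subset_neighborSet (hflag : IsFlag K) {I : Finset (Fin m)}
    {v : Fin m} (hv : (oneSkeleton K).IsClique ((oneSkeleton K).neighborSet v ∩ I))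
    {τ : Finset (Fin m)} (hτ : ↑τ ⊆ (oneSkeleton K).neighborSet v ∩ I) : insert v τ ∈ K := by
  refine hflag.mem_of_isClique ?_
  rw [Finset.coe_insert]
  exact isClique_insert.2 ⟨hv.subset hτ, fun u hu _ => (hτ hu).1⟩

lemma bdry_filter_mem_supported_neighborSet (hdown : ∀ σ ∈ K, ∀ τ ⊆ σ, τ ∈ K)
    {I : Finset (Fin m)} {v : Fin m} {n : ℕ} {x : Ch m} (hx : x ∈ fullChains K I n)
    (hbx : bdry x = 0) :
    bdry (x.filter (v ∈ ·)) ∈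
      supported ℤ ℤ {σ | ↑σ ⊆ (oneSkeleton K).neighborSet v ∩ I ∧ σ.card = n - 1} := by
  have hbab : bdry (x.filter (v ∉ ·)) = -bdry (x.filter (v ∈ ·)) := by
    rw [← filter_add_filter_not x (v ∈ ·), bdry_add] at hbx
    exact eq_neg_of_add_eq_zero_right hbx
  refine (mem_supported ℤ _).2 fun σ hσ => ?_
  obtain ⟨τ, hτ, i, -, rfl⟩ := mem_support_bdry hσ
  obtain ⟨hτx, hvτ⟩ := Finset.mem_filter.1 hτ
  obtain ⟨τ', hτ', i', -, hσ'⟩ :=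
    mem_support_bdry (by rwa [hbab, support_neg] : τ.erase i ∈ (bdry (x.filter (v ∉ ·))).support)
  -- the faces of the two halves meet only away from `v`, so `i = v`
  obtain rfl : i = v := by
    by_contra hiv
    have hvσ : v ∈ τ'.erase i' := hσ' ▸ Finset.mem_erase.2 ⟨Ne.symm hiv, hvτ⟩
    exact (Finset.mem_filter.1 hτ').2 (Finset.mem_of_mem_erase hvσ)
  obtain ⟨hτK, hτI, hτn⟩ := (mem_supported ℤ x).1 hx hτx
  refine ⟨fun u hu => ⟨⟨(Finset.ne_of_mem_erase hu).symm, hdown τ hτK _ ?_⟩,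
    hτI (Finset.mem_of_mem_erase hu)⟩, by rw [Finset.card_erase_of_mem hvτ, hτn]⟩
  exact Finset.insert_subset hvτ (Finset.singleton_subset_iff.2 (Finset.mem_of_mem_erase hu))

theorem exists_add_bdry_mem_fullChains_erase (hdown : ∀ σ ∈ K, ∀ τ ⊆ σ, τ ∈ K)
    (hflag : IsFlag K) {I : Finset (Fin m)} {v : Fin m} (hvI : v ∈ I)
    (hv : (oneSkeleton K).IsClique ((oneSkeleton K).neighborSet v ∩ I)) {n : ℕ} (hn : 2 ≤ n)
    {x : Ch m} (hx : x ∈ fullChains K I n) (hbx : bdry x = 0) :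
    ∃ γ ∈ fullChains K I (n + 1), x + bdry γ ∈ fullChains K (I.erase v) n := by
  set a := x.filter (v ∈ ·)
  set b := x.filter (v ∉ ·)
  obtain ⟨β, hβ, hbβ⟩ := exists_bdry_eq_of_supported_subset (by omega)
    (bdry_filter_mem_supported_neighborSet hdown hx hbx) (bdry_bdry a)
  rw [Nat.sub_add_cancel (by omega : 1 ≤ n)] at hβ
  refine ⟨cone v β, (mem_supported ℤ _).2 fun σ hσ => ?_, ?_⟩
  · obtain ⟨τ, hτ, hvτ, rfl⟩ := mem_support_cone hσ
    obtain ⟨hτN, hτn⟩ := (mem_supported ℤ β).1 hβ hτ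
    refine ⟨hflag.insert_mem_of_subset_neighborSet hv hτN, ?_, ?_⟩
    · exact Finset.insert_subset hvI fun u hu => (hτN hu).2
    · rw [Finset.card_insert_of_notMem hvτ, hτn]
  · have hcone : bdry (cone v β) = β - a := by
      rw [eq_sub_of_add_eq (bdry_cone_add_cone_bdry v β), hbβ,
        cone_bdry_eq_self fun σ hσ => (Finset.mem_filter (p := (v ∈ ·)).1 hσ).2]
    rw [hcone, ← filter_add_filter_not x (v ∈ ·), show a + b + (β - a) = b + β by abel]
    refine add_mem ((mem_supported ℤ _).2 fun σ hσ => ?_) ((mem_supported ℤ _).2 fun σ hσ => ?_)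
    · obtain ⟨hσx, hvσ⟩ := Finset.mem_filter.1 hσ
      obtain ⟨hσK, hσI, hσn⟩ := (mem_supported ℤ x).1 hx hσx
      exact ⟨hσK, fun u hu => Finset.mem_erase.2 ⟨fun h => hvσ (h ▸ hu), hσI hu⟩, hσn⟩
    · obtain ⟨hσN, hσn⟩ := (mem_supported ℤ β).1 hβ hσ
      refine ⟨hdown _ (hflag.insert_mem_of_subset_neighborSet hv hσN) σ
        (Finset.subset_insert v σ), fun u hu => ?_, hσn⟩
      exact Finset.mem_erase.2 ⟨((mem_neighborSet _ _ _).1 (hσN hu).1).ne.symm, (hσN hu).2⟩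

theorem exists_bdry_eq_of_mem_fullChains (hdown : ∀ σ ∈ K, ∀ τ ⊆ σ, τ ∈ K) (hflag : IsFlag K)
    (hchordal : IsChordal (oneSkeleton K)) (I : Finset (Fin m)) {n : ℕ} (hn : 2 ≤ n) {x : Ch m}
    (hx : x ∈ fullChains K I n) (hbx : bdry x = 0) :
    ∃ y ∈ fullChains K I (n + 1), bdry y = x := by
  induction I using Finset.strongInduction generalizing x with
  | H I ih =>
  rcases I.eq_empty_or_nonempty with rfl | ⟨w, hw⟩
  · refine ⟨0, zero_mem _, ?_⟩
    rw [bdry_zero, eq_comm, ← support_eq_empty, Finset.eq_empty_iff_forall_notMem]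
    intro σ hσ
    obtain ⟨-, hσI, hσn⟩ := (mem_supported ℤ x).1 hx hσ
    rw [Finset.subset_empty.1 hσI, Finset.card_empty] at hσn
    omega
  obtain ⟨v, hvI, -, hv⟩ :=
    hchordal.exists_isClique_neighborSet_inter I isClique_empty hw (Set.notMem_empty w)
  obtain ⟨γ, hγ, hz⟩ := exists_add_bdry_mem_fullChains_erase hdown hflag hvI hv hn hx hbx
  obtain ⟨y, hy, hby⟩ :=
    ih _ (Finset.erase_ssubset hvI) hz (by rw [bdry_add, hbx, bdry_bdry, add_zero])
  refine ⟨y - γ, sub_mem (fullChains_mono (Finset.erase_subset v I) _ hy) hγ, ?_⟩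
  rw [bdry_sub, hby, add_sub_cancel_right]

end FullSubcomplex

theorem flag_chordal_full_subcomplexes_acyclic_general {m : ℕ} (K : Finset (Finset (Fin m)))
    (hdown : ∀ σ ∈ K, ∀ τ ⊆ σ, τ ∈ K)
    (hflag : IsFlag K) (hchordal : IsChordal (oneSkeleton K)) :
    ∀ (I : Finset (Fin m)) (p : ℕ), 1 ≤ p →
      ∀ x : Ch m, (∀ σ ∈ x.support, σ ∈ K ∧ σ ⊆ I ∧ σ.card = p + 1) → bdry x = 0 →
        ∃ y : Ch m, (∀ σ ∈ y.support, σ ∈ K ∧ σ ⊆ I ∧ σ.card = p + 2) ∧ bdry y = x := by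
  intro I p hp x hx hbx
  obtain ⟨y, hy, hby⟩ := exists_bdry_eq_of_mem_fullChains hdown hflag hchordal I
    (by omega : 2 ≤ p + 1) ((Finsupp.mem_supported ℤ x).2 hx) hbx
  exact ⟨y, (Finsupp.mem_supported ℤ y).1 hy, hby⟩

/-- If `K` is a flag simplicial complex whose one-skeleton is a chordal graph, then
every full subcomplex `K_I` is homotopy equivalent to a discrete set of points;
in particular `H̃_p(K_I) = 0` for all `p ≥ 1` and all `I ⊆ [m]`: every reduced
`p`-cycle of `K_I` is a boundary. -/
theorem flag_chordal_full_subcomplexes_acyclic {m : ℕ} (K : Finset (Finset (Fin m)))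
    (hempty : ∅ ∈ K) (hverts : ∀ i : Fin m, {i} ∈ K)
    (hdown : ∀ σ ∈ K, ∀ τ ⊆ σ, τ ∈ K)
    (hflag : IsFlag K) (hchordal : IsChordal (oneSkeleton K)) :
    ∀ (I : Finset (Fin m)) (p : ℕ), 1 ≤ p →
      ∀ x : Ch m, (∀ σ ∈ x.support, σ ∈ K ∧ σ ⊆ I ∧ σ.card = p + 1) → bdry x = 0 →
        ∃ y : Ch m, (∀ σ ∈ y.support, σ ∈ K ∧ σ ⊆ I ∧ σ.card = p + 2) ∧ bdry y = x :=
  flag_chordal_full_subcomplexes_acyclic_general K hdown hflag hchordal
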